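/- Let G be a connected graph in which edges e_1,...,e_n form a cycle. Then the dual Dodgson polynomials satisfy φ^1 = Σ_{j=2}^{n} λ_j φ^{1,j} for suitable signs λ_j = ±1, where φ^1 = φ_{G//e_1} and φ^{1,j} are the dual Dodgson polynomials with respect to edges e_1, e_j. -/

import Mathlib

open scoped Classical

noncomputable section

/-- A finite multigraph with edges labelled by `Fin N`, each edge oriented
from its source `s e` to its target `t e`. -/
structure DodgsonGraph (N : ℕ) where
  V : Type
  [fV : Fintype V]
  [dV : DecidableEq V]
  s : Fin N → V
  t : Fin N → V

namespace DodgsonGraph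

variable {N : ℕ}

instance (G : DodgsonGraph N) : Fintype G.V := G.fV
instance (G : DodgsonGraph N) : DecidableEq G.V := G.dV

/-- The loop number (first Betti number) `h_G = N_G - |V| + 1` of a connected graph. -/
def loopNumber (G : DodgsonGraph N) : ℕ := N + 1 - Fintype.card G.V

/-- Adjacency of two vertices through an edge of the edge set `S` (ignoring orientation). -/
def Adj (G : DodgsonGraph N) (S : Finset (Fin N)) (u v : G.V) : Prop :=
  ∃ e ∈ S, (G.s e = u ∧ G.t e = v) ∨ (G.s e = v ∧ G.t e = u)

/-- The subgraph with edge set `S` (and all vertices) is connected. -/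
def ConnectedOn (G : DodgsonGraph N) (S : Finset (Fin N)) : Prop :=
  ∀ u v : G.V, Relation.ReflTransGen (G.Adj S) u v

def IsConnected (G : DodgsonGraph N) : Prop := G.ConnectedOn Finset.univ

/-- A spanning tree: a connected spanning subgraph with `|V| - 1` edges. -/
def IsSpanningTree (G : DodgsonGraph N) (T : Finset (Fin N)) : Prop :=
  G.ConnectedOn T ∧ T.card + 1 = Fintype.card G.V

/-- The dual graph polynomial `φ_G = Σ_{spanning trees T} Π_{e ∈ T} α_e`. -/
def dualPoly (G : DodgsonGraph N) : MvPolynomial (Fin N) ℤ :=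
  ∑ T ∈ Finset.univ.filter (fun T => G.IsSpanningTree T), ∏ e ∈ T, MvPolynomial.X e

/-- The Kirchhoff graph polynomial `Ψ_G = Σ_{spanning trees T} Π_{e ∉ T} α_e`. -/
def graphPoly (G : DodgsonGraph N) : MvPolynomial (Fin N) ℤ :=
  ∑ T ∈ Finset.univ.filter (fun T => G.IsSpanningTree T), ∏ e ∈ Tᶜ, MvPolynomial.X e

/-- The boundary map `∂ : ℤ^E → ℤ^V`, `e ↦ (target e) - (source e)`. -/
def bdry (G : DodgsonGraph N) (x : Fin N → ℤ) : G.V → ℤ := fun v =>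
  ∑ e, x e * ((if G.t e = v then 1 else 0) - (if G.s e = v then 1 else 0))

/-- `c ∈ ℤ^E` is (the pre-image of) an oriented cycle (topological loop):
its support is a cyclically ordered set of edges through distinct vertices,
with entry `+1` or `-1` according to whether the orientation of the edge
agrees with that of the cycle. -/
def IsCycleVector (G : DodgsonGraph N) (c : Fin N → ℤ) : Prop :=
  ∃ (n : ℕ) (_ : 0 < n) (f : Fin n → Fin N) (g : Fin n → G.V),
    Function.Injective f ∧ Function.Injective g ∧
    (∀ i : Fin n,
      (c (f i) = 1 ∧ G.s (f i) = g i ∧ G.t (f i) = g ⟨(i.val + 1) % n, Nat.mod_lt _ (Nat.lt_of_le_of_lt (Nat.zero_le _) i.isLt)⟩) ∨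
      (c (f i) = -1 ∧ G.t (f i) = g i ∧ G.s (f i) = g ⟨(i.val + 1) % n, Nat.mod_lt _ (Nat.lt_of_le_of_lt (Nat.zero_le _) i.isLt)⟩)) ∧
    (∀ e : Fin N, e ∉ Set.range f → c e = 0)

/-- A basis of small cycles: (i) each `C i` is an oriented cycle, (ii) the `C i`
generate `H_1(G,ℤ) = ker ∂`, and (iii) if `C i + Σ_{j ≠ i} λ_j C j = μ c` with
`c ∈ H_1(G,ℤ)` and `μ ≠ 0`, then `μ = ±1`. -/
def IsSmallCycleBasis (G : DodgsonGraph N) (C : Fin G.loopNumber → Fin N → ℤ) : Prop :=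
  (∀ i, G.IsCycleVector (C i)) ∧
  (∀ c : Fin N → ℤ, G.bdry c = 0 → c ∈ Submodule.span ℤ (Set.range C)) ∧
  (∀ (i : Fin G.loopNumber) (lam : Fin G.loopNumber → ℤ) (c : Fin N → ℤ) (μ : ℤ),
    G.bdry c = 0 → μ ≠ 0 →
    C i + ∑ j ∈ Finset.univ.erase i, lam j • C j = μ • c → μ = 1 ∨ μ = -1)

/-- `G` has a cycle (closed walk through distinct edges and distinct vertices)
of length `n`. -/
def HasCycleOfLength (G : DodgsonGraph N) (n : ℕ) : Prop :=
  ∃ (f : Fin n → Fin N) (g : Fin n → G.V),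
    Function.Injective f ∧ Function.Injective g ∧
    ∀ i : Fin n, (G.s (f i) = g i ∧ G.t (f i) = g ⟨(i.val + 1) % n, Nat.mod_lt _ (Nat.lt_of_le_of_lt (Nat.zero_le _) i.isLt)⟩) ∨
      (G.t (f i) = g i ∧ G.s (f i) = g ⟨(i.val + 1) % n, Nat.mod_lt _ (Nat.lt_of_le_of_lt (Nat.zero_le _) i.isLt)⟩)

/-- The matrix `L_G = [[Δ(α), F^t], [-F, 0]]`, where `F` is the cycle-edge
incidence matrix of a basis of small cycles `C`. -/
def LG (G : DodgsonGraph N) (C : Fin G.loopNumber → Fin N → ℤ) :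
    Matrix (Fin (N + G.loopNumber)) (Fin (N + G.loopNumber)) (MvPolynomial (Fin N) ℤ) :=
  Matrix.reindex finSumFinEquiv finSumFinEquiv
    (Matrix.fromBlocks
      (Matrix.diagonal fun e => MvPolynomial.X e)
      (Matrix.of fun e i => ((C i e : ℤ) : MvPolynomial (Fin N) ℤ))
      (Matrix.of fun i e => ((-(C i e) : ℤ) : MvPolynomial (Fin N) ℤ))
      (0 : Matrix (Fin G.loopNumber) (Fin G.loopNumber) (MvPolynomial (Fin N) ℤ)))

end DodgsonGraph

/-- The determinant of the minor of `M` obtained by deleting the rows indexed by `I`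
and the columns indexed by `J`, with rows and columns of the minor enumerated in
increasing order (and `0` if the sizes do not match). -/
def minorDet {R : Type} [CommRing R] {m : ℕ}
    (M : Matrix (Fin m) (Fin m) R) (I J : Finset (Fin m)) : R :=
  if h : (Iᶜ : Finset (Fin m)).card = (Jᶜ : Finset (Fin m)).card then
    Matrix.det (Matrix.of fun i j : Fin (Iᶜ : Finset (Fin m)).card =>
      M (((Iᶜ : Finset (Fin m)).orderIsoOfFin rfl i).1)
        (((Jᶜ : Finset (Fin m)).orderIsoOfFin h.symm j).1))
  else 0

namespace DodgsonGraph

/-- The dual Dodgson polynomial `φ^{I,J}_{G,K} = det L_G(I,J)|_{α_K = 0}`: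
the determinant of `L_G` with the rows labelled by the edges of `I` and the
columns labelled by the edges of `J` deleted, and the variables of `K` set to zero. -/
def dualDodgson {N : ℕ} (G : DodgsonGraph N) (C : Fin G.loopNumber → Fin N → ℤ)
    (I J K : Finset (Fin N)) : MvPolynomial (Fin N) ℤ :=
  MvPolynomial.aeval
    (fun e => if e ∈ K then (0 : MvPolynomial (Fin N) ℤ) else MvPolynomial.X e)
    (minorDet (G.LG C) (I.image (Fin.castAdd G.loopNumber)) (J.image (Fin.castAdd G.loopNumber)))

/-- Edges `e1 e2 e3` form a triangle on distinct vertices `u v w`, with the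
edges oriented consistently along the triangle. -/
def HasOrientedTriangle (G : DodgsonGraph N) (e1 e2 e3 : Fin N) : Prop :=
  ∃ u v w : G.V, u ≠ v ∧ v ≠ w ∧ u ≠ w ∧
    G.s e1 = u ∧ G.t e1 = v ∧ G.s e2 = v ∧ G.t e2 = w ∧ G.s e3 = w ∧ G.t e3 = u

/-- Edges `e1 e2 e3 e4` bound a 4-face (a 4-cycle on distinct vertices), with
`e1, e2` adjacent and `e1, e3` opposite, oriented consistently along the face. -/
def HasOrientedQuadFace (G : DodgsonGraph N) (e1 e2 e3 e4 : Fin N) : Prop :=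
  ∃ p q r s : G.V, p ≠ q ∧ p ≠ r ∧ p ≠ s ∧ q ≠ r ∧ q ≠ s ∧ r ≠ s ∧
    G.s e1 = p ∧ G.t e1 = q ∧ G.s e2 = q ∧ G.t e2 = r ∧
    G.s e3 = r ∧ G.t e3 = s ∧ G.s e4 = s ∧ G.t e4 = p

end DodgsonGraph

/-- `[f_1,…,f_k]_q`: the number of `F_q`-rational common zeros in `F^n` of a finite
set of integer polynomials (coefficients reduced to the finite field `F`). -/
def countZeros (F : Type) [Field F] [Fintype F] {n : ℕ}
    (S : Finset (MvPolynomial (Fin n) ℤ)) : ℕ :=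
  Nat.card {x : Fin n → F // ∀ p ∈ S, MvPolynomial.aeval x p = 0}

end

/-!
The edges of the cycle, signed by their orientation along it, form a vector `c ∈ ker ∂`, hence an
integer combination of the small cycles. Expanding a cycle row `(-C i, 0)` of `L_G` against the
cofactors of the row of `e₁` gives zero (expansion by alien cofactors), so by linearity
`∑ₑ c e (-1)^(e₁+e) φ^{e₁,e} = 0`. The support of `c` is the cycle and its entries are `±1`, so this
is a signed relation among `φ^{1,j}`, `j = 1, …, n`, which can be solved for `φ^{1,1} = φ^1`.
-/

open Matrix Finset

lemma minorDet_singleton {R : Type} [CommRing R] {m : ℕ}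
    (M : Matrix (Fin (m + 1)) (Fin (m + 1)) R) (r j : Fin (m + 1)) :
    minorDet M {r} {j} = (M.submatrix r.succAbove j.succAbove).det := by
  have hcard : ({r}ᶜ : Finset (Fin (m + 1))).card = m := by simp [card_compl]
  rw [minorDet, dif_pos (by simp [card_compl]), ← det_reindex_self (finCongr hcard)]
  congr 1
  ext a b
  simp [coe_orderIsoOfFin_apply, orderEmbOfFin_compl_singleton_apply]

namespace Matrix

lemma adjugate_apply_eq_minorDet {R : Type} [CommRing R] {m : ℕ}
    (M : Matrix (Fin m) (Fin m) R) (i j : Fin m) :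
    adjugate M i j = (-1) ^ (j + i : ℕ) * minorDet M {j} {i} := by
  cases m with
  | zero => exact i.elim0
  | succ m => rw [adjugate_fin_succ_eq_det_submatrix, minorDet_singleton]

lemma sum_mul_adjugate_eq_zero {R : Type} [CommRing R] {n : Type} [Fintype n] [DecidableEq n]
    (M : Matrix n n R) {k r : n} (hkr : k ≠ r) :
    ∑ j, M k j * adjugate M j r = 0 := by
  simpa [mul_apply, hkr] using congr_fun (congr_fun (mul_adjugate M) k) r

end Matrix

lemma coe_finRotate_eq_mod (n : ℕ) (i : Fin n) : (finRotate n i : ℕ) = (i + 1) % n := by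
  cases n with
  | zero => exact i.elim0
  | succ n => simp [finRotate_apply, Fin.val_add]

lemma eq_sum_erase_smul_of_sum_smul_eq_zero {ι M : Type*} [Fintype ι] [DecidableEq ι]
    [AddCommGroup M] {ε : ι → ℤ} {x : ι → M} {i₀ : ι} (hε : ε i₀ * ε i₀ = 1)
    (h : ∑ i, ε i • x i = 0) :
    x i₀ = ∑ j ∈ univ.erase i₀, (-(ε i₀ * ε j)) • x j := by
  rw [← add_sum_erase _ _ (mem_univ i₀)] at h
  calc x i₀ = ε i₀ • ε i₀ • x i₀ := by rw [smul_smul, hε, one_smul]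
    _ = ε i₀ • -∑ j ∈ univ.erase i₀, ε j • x j := by rw [eq_neg_of_add_eq_zero_left h]
    _ = _ := by
      rw [smul_neg, smul_sum, ← sum_neg_distrib]
      exact sum_congr rfl fun j _ => by rw [neg_smul, mul_smul]

namespace DodgsonGraph

variable {N : ℕ} (G : DodgsonGraph N)

lemma exists_bdry_eq_zero_of_cycle {n : ℕ} {f : Fin n → Fin N} (g : Fin n → G.V)
    (hf : Function.Injective f)
    (hcyc : ∀ i, (G.s (f i) = g i ∧ G.t (f i) = g (finRotate n i)) ∨
      (G.t (f i) = g i ∧ G.s (f i) = g (finRotate n i))) :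
    ∃ c : Fin N → ℤ, G.bdry c = 0 ∧ (∀ e ∉ Set.range f, c e = 0) ∧
      ∀ i, c (f i) = 1 ∨ c (f i) = -1 := by
  let d : Fin n → ℤ := fun i =>
    if G.s (f i) = g i ∧ G.t (f i) = g (finRotate n i) then 1 else -1
  refine ⟨Function.extend f d 0, ?_, fun e he => Function.extend_apply' _ _ _ (by simpa using he),
    fun i => by rw [hf.extend_apply]; dsimp only [d]; split_ifs <;> simp⟩
  have hstep : ∀ v i, d i * ((if G.t (f i) = v then 1 else 0) - (if G.s (f i) = v then 1 else 0)) =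
      (if g (finRotate n i) = v then 1 else 0) - (if g i = v then 1 else 0) := by
    intro v i
    by_cases h : G.s (f i) = g i ∧ G.t (f i) = g (finRotate n i)
    · simp only [d, if_pos h, h.1, h.2, one_mul]
    · obtain ⟨ht, hs⟩ := (hcyc i).resolve_left h
      simp only [d, if_neg h, ht, hs]
      ring
  funext v
  rw [bdry, Pi.zero_apply, ← Fintype.sum_of_injective f hf _ _ (fun e he => by
    rw [Function.extend_apply' _ _ _ (by simpa using he), Pi.zero_apply, zero_mul]) (fun i => rfl)]
  simp only [hf.extend_apply, hstep, sum_sub_distrib,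
    Equiv.sum_comp (finRotate n) (fun i => if g i = v then (1 : ℤ) else 0), sub_self]

lemma dualDodgson_empty (C : Fin G.loopNumber → Fin N → ℤ) (I J : Finset (Fin N)) :
    G.dualDodgson C I J ∅ =
      minorDet (G.LG C) (I.image (Fin.castAdd _)) (J.image (Fin.castAdd _)) := by
  simp [dualDodgson]

lemma adjugate_LG_castAdd (C : Fin G.loopNumber → Fin N → ℤ) (e e' : Fin N) :
    adjugate (G.LG C) (Fin.castAdd _ e) (Fin.castAdd _ e') =
      (-1) ^ (e' + e : ℕ) * G.dualDodgson C {e'} {e} ∅ := by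
  simp [adjugate_apply_eq_minorDet, dualDodgson_empty]

lemma LG_natAdd_castAdd (C : Fin G.loopNumber → Fin N → ℤ) (i : Fin G.loopNumber) (e : Fin N) :
    G.LG C (Fin.natAdd N i) (Fin.castAdd _ e) = -(C i e : MvPolynomial (Fin N) ℤ) := by
  simp [LG]

lemma LG_natAdd_natAdd (C : Fin G.loopNumber → Fin N → ℤ) (i j : Fin G.loopNumber) :
    G.LG C (Fin.natAdd N i) (Fin.natAdd N j) = 0 := by
  simp [LG]

lemma sum_smul_adjugate_LG_eq_zero (C : Fin G.loopNumber → Fin N → ℤ) {c : Fin N → ℤ}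
    (hc : c ∈ Submodule.span ℤ (Set.range C)) (r : Fin N) :
    ∑ e, c e • adjugate (G.LG C) (Fin.castAdd _ e) (Fin.castAdd _ r) = 0 := by
  suffices Submodule.span ℤ (Set.range C) ≤ LinearMap.ker (Fintype.linearCombination ℤ
      fun e => adjugate (G.LG C) (Fin.castAdd _ e) (Fin.castAdd _ r)) from this hc
  rw [Submodule.span_le, Set.range_subset_iff]
  intro i
  have hrow : Fin.natAdd N i ≠ Fin.castAdd G.loopNumber r := by
    simp [Fin.ext_iff]; omega
  have := sum_mul_adjugate_eq_zero (G.LG C) hrow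
  rw [Fin.sum_univ_add] at this
  simpa [Fintype.linearCombination_apply, LG_natAdd_castAdd, LG_natAdd_natAdd, zsmul_eq_mul]
    using this

end DodgsonGraph

theorem statement9_general (N n : ℕ) (hn : 0 < n) (G : DodgsonGraph N)
    (C : Fin G.loopNumber → Fin N → ℤ) (hC : G.IsSmallCycleBasis C)
    (f : Fin n → Fin N) (g : Fin n → G.V)
    (hf : Function.Injective f)
    (hcyc : ∀ i : Fin n,
      (G.s (f i) = g i ∧
        G.t (f i) = g ⟨(i.val + 1) % n, Nat.mod_lt _ hn⟩) ∨
      (G.t (f i) = g i ∧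
        G.s (f i) = g ⟨(i.val + 1) % n, Nat.mod_lt _ hn⟩)) :
    ∃ lam : Fin n → ℤ, (∀ j, j ≠ (⟨0, hn⟩ : Fin n) → lam j = 1 ∨ lam j = -1) ∧
      G.dualDodgson C {f ⟨0, hn⟩} {f ⟨0, hn⟩} ∅ =
        ∑ j ∈ Finset.univ.erase (⟨0, hn⟩ : Fin n),
          lam j • G.dualDodgson C {f ⟨0, hn⟩} {f j} ∅ := by
  set i₀ : Fin n := ⟨0, hn⟩
  have hnext : ∀ i : Fin n, (⟨(i + 1) % n, Nat.mod_lt _ hn⟩ : Fin n) = finRotate n i :=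
    fun i => Fin.ext (coe_finRotate_eq_mod n i).symm
  obtain ⟨c, hc_bdry, hc_supp, hc_sign⟩ :=
    G.exists_bdry_eq_zero_of_cycle g hf (by simpa only [hnext] using hcyc)
  obtain ⟨-, hspan, -⟩ := hC
  have hrel := G.sum_smul_adjugate_LG_eq_zero C (hspan c hc_bdry) (f i₀)
  rw [← Fintype.sum_of_injective f hf _ _ (fun e he => by rw [hc_supp e he, zero_smul])
    (fun i => rfl)] at hrel
  let ε : Fin n → ℤ := fun i => c (f i) * (-1) ^ (f i₀ + f i : ℕ)
  have hε : ∀ i, ε i = 1 ∨ ε i = -1 := fun i => by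
    rcases hc_sign i with h | h <;> rcases neg_one_pow_eq_or ℤ (f i₀ + f i : ℕ) with h' | h' <;>
      simp [ε, h, h']
  refine ⟨fun j => -(ε i₀ * ε j), fun j _ => ?_,
    eq_sum_erase_smul_of_sum_smul_eq_zero (ε := ε) (x := fun i => G.dualDodgson C {f i₀} {f i} ∅)
      (by rcases hε i₀ with h | h <;> rw [h] <;> norm_num) ?_⟩
  · rcases hε i₀ with h | h <;> rcases hε j with h' | h' <;> simp [h, h']
  · simpa [DodgsonGraph.adjugate_LG_castAdd, ε, mul_smul, zsmul_eq_mul] using hrel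

/-- if the edges `f 0, …, f (n-1)` form a cycle of `G`, then
`φ^1 = Σ_{j≠1} λ_j φ^{1,j}` for suitable signs `λ_j = ±1`, where
`φ^1 = φ_{G//e_1}` and `φ^{1,j}` are dual Dodgson polynomials. -/
theorem statement9 (N n : ℕ) (hn : 0 < n) (G : DodgsonGraph N) [Nonempty G.V]
    (hconn : G.IsConnected)
    (C : Fin G.loopNumber → Fin N → ℤ) (hC : G.IsSmallCycleBasis C)
    (f : Fin n → Fin N) (g : Fin n → G.V)
    (hf : Function.Injective f) (hg : Function.Injective g)
    (hcyc : ∀ i : Fin n,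
      (G.s (f i) = g i ∧
        G.t (f i) = g ⟨(i.val + 1) % n, Nat.mod_lt _ hn⟩) ∨
      (G.t (f i) = g i ∧
        G.s (f i) = g ⟨(i.val + 1) % n, Nat.mod_lt _ hn⟩)) :
    ∃ lam : Fin n → ℤ, (∀ j, j ≠ (⟨0, hn⟩ : Fin n) → lam j = 1 ∨ lam j = -1) ∧
      G.dualDodgson C {f ⟨0, hn⟩} {f ⟨0, hn⟩} ∅ =
        ∑ j ∈ Finset.univ.erase (⟨0, hn⟩ : Fin n),
          lam j • G.dualDodgson C {f ⟨0, hn⟩} {f j} ∅ :=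
  statement9_general N n hn G C hC f g hf hcyc
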